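/- arXiv:1202.4517 — 8 statements merged into one kernel-verified Lean document; each statement's English description precedes it below -/
import Mathlib

section
/- Let g ≥ 0 and let a ∈ ℂ[λ] be a polynomial of degree 2g whose leading coefficient has absolute value 1, which satisfies the reality condition λ^{2g}·conj(a(1/conj(λ))) = a(λ) for all λ ∈ ℂ∖{0}, for which λ^{−g}·a(λ) is a positive real number for every λ with |λ| = 1, and whose 2g roots are pairwise distinct. Then there exist pairwise distinct η_1, …, η_g ∈ ℂ with 0 < |η_j| < 1 such that a(λ) = (−1)^g ∏_{j=1}^g (conj(η_j)/|η_j|)·(λ − η_j)·(λ − 1/conj(η_j)). -/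
/-!
The reality condition says that `a` equals its conjugate reciprocal
`λ ^ 2g · conj (a (1 / conj λ))`, so `a 0 = conj (leadingCoeff a) ≠ 0` and the roots are
stable under the inversion `ρ ↦ 1 / conj ρ` in the unit circle; positivity on the circle rules
out roots of modulus one. Hence the `2g` simple roots are `g` roots `η j` in the open unit disc
together with their inversions, and `a = lc · ∏ (λ - η j) (λ - 1 / conj (η j))`. At `λ = 1`
each factor times `-conj (η j) / |η j|` equals `|1 - η j| ^ 2 / |η j| > 0`, while `a 1 > 0`;
so `lc` and `(-1) ^ g ∏ conj (η j) / |η j|` differ by a positive factor, and having modulus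
one they coincide.
-/

open Polynomial ComplexConjugate

lemma Finset.val_eq_filter_add_map_filter {α : Type*} {s : Finset α} {σ : α → α}
    (hσ : Function.Involutive σ) (p : α → Prop) [DecidablePred p] (hs : ∀ x ∈ s, σ x ∈ s)
    (hp : ∀ x ∈ s, ¬p x ↔ p (σ x)) :
    s.val = (s.filter p).val + (s.filter p).val.map σ := by
  conv_lhs => rw [← Multiset.filter_add_not p s.val]
  congr 1
  rw [Multiset.Nodup.ext (s.nodup.filter _) ((s.filter p).nodup.map hσ.injective)]
  intro x
  simp only [Multiset.mem_filter, Finset.mem_val, Multiset.mem_map, Finset.mem_filter]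
  constructor
  · rintro ⟨hx, hpx⟩
    exact ⟨σ x, ⟨hs x hx, (hp x hx).mp hpx⟩, hσ x⟩
  · rintro ⟨y, ⟨hy, hpy⟩, rfl⟩
    exact ⟨hs y hy, (hp _ (hs y hy)).mpr (by rwa [hσ y])⟩

-- The reality condition of degree `n`.
def IsSelfInversive (n : ℕ) (p : ℂ[X]) : Prop :=
  ∀ l : ℂ, l ≠ 0 → l ^ n * conj (p.eval (conj l)⁻¹) = p.eval l

namespace IsSelfInversive

variable {n : ℕ} {p : ℂ[X]}

lemma eval_reflect_map_conj (hn : p.natDegree ≤ n) {l : ℂ} (hl : l ≠ 0) :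
    (reflect n (p.map (starRingEnd ℂ))).eval l = l ^ n * conj (p.eval (conj l)⁻¹) := by
  have : Invertible l⁻¹ := invertibleOfNonzero (inv_ne_zero hl)
  have h := eval₂_reflect_mul_pow (RingHom.id ℂ) l⁻¹ n (p.map (starRingEnd ℂ))
    (by rwa [natDegree_map])
  simp only [invOf_eq_inv, inv_inv, eval₂_id, eval_map] at h
  rw [← eval₂_at_apply, map_inv₀, Complex.conj_conj, ← h, mul_left_comm, ← mul_pow,
    mul_inv_cancel₀ hl, one_pow, mul_one]

lemma eq_reflect_map_conj (h : IsSelfInversive n p) (hn : p.natDegree ≤ n) :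
    p = reflect n (p.map (starRingEnd ℂ)) := by
  refine eq_of_infinite_eval_eq _ _ (Set.infinite_of_finite_compl ?_)
  refine (Set.finite_singleton 0).subset fun l hl => ?_
  by_contra hl0
  exact hl (by rw [Set.mem_ofPred_eq, eval_reflect_map_conj hn hl0, h l hl0])

lemma coeff_zero_eq_conj_leadingCoeff (h : IsSelfInversive n p) (hn : p.natDegree = n) :
    p.coeff 0 = conj p.leadingCoeff := by
  rw [leadingCoeff, hn]
  conv_lhs => rw [h.eq_reflect_map_conj hn.le]
  rw [coeff_reflect, revAt_le n.zero_le, coeff_map, Nat.sub_zero]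

lemma eval_zero_ne_zero (h : IsSelfInversive n p) (hn : p.natDegree = n) (hp : p ≠ 0) :
    p.eval 0 ≠ 0 := by
  rw [← coeff_zero_eq_eval_zero, h.coeff_zero_eq_conj_leadingCoeff hn, _root_.map_ne_zero]
  exact leadingCoeff_ne_zero.mpr hp

lemma isRoot_inv_conj (h : IsSelfInversive n p) {ρ : ℂ} (hρ : p.IsRoot ρ) (hρ0 : ρ ≠ 0) :
    p.IsRoot (conj ρ)⁻¹ := by
  have := h (conj ρ)⁻¹ (by simpa using hρ0)
  rw [map_inv₀, Complex.conj_conj, inv_inv, hρ.eq_zero, map_zero, mul_zero] at this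
  exact this.symm

lemma ne_zero_of_mem_roots (h : IsSelfInversive n p) (hn : p.natDegree = n) {ρ : ℂ}
    (hρ : ρ ∈ p.roots) : ρ ≠ 0 := by
  rintro rfl
  exact h.eval_zero_ne_zero hn (Polynomial.ne_zero_of_mem_roots hρ) (isRoot_of_mem_roots hρ)

lemma roots_eq_filter_add_map_filter (h : IsSelfInversive n p) (hn : p.natDegree = n)
    (hnodup : p.roots.Nodup) (hcircle : ∀ ρ, p.IsRoot ρ → ‖ρ‖ ≠ 1) :
    p.roots = (p.roots.toFinset.filter (‖·‖ < 1)).val +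
      (p.roots.toFinset.filter (‖·‖ < 1)).val.map fun ρ => (conj ρ)⁻¹ := by
  have hσ : Function.Involutive fun ρ : ℂ => (conj ρ)⁻¹ := fun ρ => by
    simp only [map_inv₀, Complex.conj_conj, inv_inv]
  have key := Finset.val_eq_filter_add_map_filter hσ (‖·‖ < 1) (s := p.roots.toFinset)
    (fun ρ hρ => by
      rw [Multiset.mem_toFinset] at hρ ⊢
      exact (mem_roots (Polynomial.ne_zero_of_mem_roots hρ)).mpr
        (h.isRoot_inv_conj (isRoot_of_mem_roots hρ) (h.ne_zero_of_mem_roots hn hρ)))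
    (fun ρ hρ => by
      rw [Multiset.mem_toFinset] at hρ
      have hpos : 0 < ‖ρ‖ := norm_pos_iff.mpr (h.ne_zero_of_mem_roots hn hρ)
      have hne := hcircle ρ (isRoot_of_mem_roots hρ)
      rw [norm_inv, Complex.norm_conj, inv_lt_one₀ hpos, not_lt]
      exact ⟨fun hle => lt_of_le_of_ne hle hne.symm, le_of_lt⟩)
  rwa [Multiset.toFinset_val, hnodup.dedup] at key

lemma exists_eq_C_leadingCoeff_mul_prod {g : ℕ} (h : IsSelfInversive (2 * g) p)
    (hn : p.natDegree = 2 * g) (hnodup : p.roots.Nodup) (hcircle : ∀ ρ, p.IsRoot ρ → ‖ρ‖ ≠ 1) :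
    ∃ η : Fin g → ℂ, Function.Injective η ∧ (∀ j, 0 < ‖η j‖ ∧ ‖η j‖ < 1) ∧
      p = C p.leadingCoeff * ∏ j, ((X - C (η j)) * (X - C (conj (η j))⁻¹)) := by
  have hroots := h.roots_eq_filter_add_map_filter hn hnodup hcircle
  set S := p.roots.toFinset.filter (‖·‖ < 1)
  have hcard : S.card = g := by
    have := congrArg Multiset.card hroots
    rw [IsAlgClosed.card_roots_eq_natDegree, hn, Multiset.card_add, Multiset.card_map] at this
    rw [Finset.card_val] at this
    omega
  set e := S.equivFinOfCardEq hcard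
  refine ⟨fun j => e.symm j, Subtype.val_injective.comp e.symm.injective, fun j => ?_, ?_⟩
  · obtain ⟨hρ, hlt⟩ := Finset.mem_filter.mp (e.symm j).2
    exact ⟨norm_pos_iff.mpr (h.ne_zero_of_mem_roots hn (Multiset.mem_toFinset.mp hρ)), hlt⟩
  calc p = C p.leadingCoeff * (p.roots.map fun ρ => X - C ρ).prod :=
        (C_leadingCoeff_mul_prod_multiset_X_sub_C IsAlgClosed.card_roots_eq_natDegree).symm
    _ = C p.leadingCoeff * ∏ ρ ∈ S, ((X - C ρ) * (X - C (conj ρ)⁻¹)) := by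
        rw [hroots, Multiset.map_add, Multiset.prod_add, Multiset.map_map, Finset.prod_mul_distrib]
        rfl
    _ = _ := by
        rw [← Finset.prod_coe_sort S]
        exact congrArg _
          (e.symm.prod_comp fun ρ : S => (X - C (ρ : ℂ)) * (X - C (conj (ρ : ℂ))⁻¹)).symm

end IsSelfInversive

section ComplexOrder

open scoped ComplexOrder

lemma Complex.eq_of_norm_eq_of_mul_pos {z w x : ℂ} (hzw : ‖z‖ = ‖w‖) (hz : 0 < z * x)
    (hw : 0 < w * x) : z = w := by
  have hx : x ≠ 0 := by rintro rfl; simp at hz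
  refine mul_right_cancel₀ hx ?_
  rw [← Complex.norm_of_nonneg' hz.le, ← Complex.norm_of_nonneg' hw.le, norm_mul, norm_mul, hzw]

lemma neg_mul_eval_one_pos {η : ℂ} (h0 : η ≠ 0) (h1 : η ≠ 1) :
    0 < -(conj η / ‖η‖) * ((X - C η) * (X - C (conj η)⁻¹)).eval 1 := by
  have hreal : -(conj η / ‖η‖) * ((X - C η) * (X - C (conj η)⁻¹)).eval 1 =
      ((Complex.normSq (1 - η) / ‖η‖ : ℝ) : ℂ) := by
    have : conj η ≠ 0 := by simpa using h0
    have : (‖η‖ : ℂ) ≠ 0 := by simpa using h0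
    push_cast
    rw [Complex.normSq_eq_conj_mul_self]
    simp only [eval_mul, eval_sub, eval_X, eval_C, map_sub, map_one]
    field_simp
    ring
  rw [hreal, Complex.zero_lt_real]
  exact div_pos (Complex.normSq_pos.mpr (sub_ne_zero.mpr h1.symm)) (norm_pos_iff.mpr h0)

lemma Finset.prod_neg_mul_eval_one_pos {ι : Type*} (s : Finset ι) (η : ι → ℂ)
    (h0 : ∀ j ∈ s, η j ≠ 0) (h1 : ∀ j ∈ s, η j ≠ 1) :
    0 < (-1) ^ s.card * (∏ j ∈ s, conj (η j) / ‖η j‖) *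
      (∏ j ∈ s, (X - C (η j)) * (X - C (conj (η j))⁻¹)).eval 1 := by
  rw [← Finset.prod_neg, eval_prod, ← Finset.prod_mul_distrib]
  exact Finset.prod_pos fun j hj => neg_mul_eval_one_pos (h0 j hj) (h1 j hj)

end ComplexOrder

theorem stmt1 (g : ℕ) (a : Polynomial ℂ)
    (hdeg : a.degree = (2 * g : ℕ))
    (hlead : ‖a.leadingCoeff‖ = 1)
    (hreal : ∀ l : ℂ, l ≠ 0 →
      l ^ (2 * g) * (starRingEnd ℂ) (a.eval (((starRingEnd ℂ) l)⁻¹)) = a.eval l)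
    (hpos : ∀ l : ℂ, ‖l‖ = 1 → ∃ r : ℝ, 0 < r ∧ a.eval l / l ^ g = (r : ℂ))
    (hroots : a.roots.Nodup) :
    ∃ η : Fin g → ℂ, Function.Injective η ∧
      (∀ j, 0 < ‖η j‖ ∧ ‖η j‖ < 1) ∧
      a = (-1) ^ g *
        ∏ j, (C ((starRingEnd ℂ) (η j) / (‖η j‖ : ℂ)) *
          ((X - C (η j)) * (X - C (((starRingEnd ℂ) (η j))⁻¹)))) := by
  have hnd : a.natDegree = 2 * g := natDegree_eq_of_degree_eq_some hdeg
  have hcircle : ∀ ρ, a.IsRoot ρ → ‖ρ‖ ≠ 1 := fun ρ hρ h1 => by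
    obtain ⟨r, hr, he⟩ := hpos ρ h1
    rw [hρ.eq_zero, zero_div, eq_comm, Complex.ofReal_eq_zero] at he
    exact hr.ne' he
  obtain ⟨η, hinj, hnorm, hfac⟩ :=
    IsSelfInversive.exists_eq_C_leadingCoeff_mul_prod hreal hnd hroots hcircle
  have hlc : a.leadingCoeff = (-1) ^ g * ∏ j, conj (η j) / ‖η j‖ := by
    refine Complex.eq_of_norm_eq_of_mul_pos
      (x := (∏ j, (X - C (η j)) * (X - C (conj (η j))⁻¹)).eval 1) ?_ ?_ ?_
    · rw [hlead, norm_mul, norm_pow, norm_neg, norm_one, one_pow, one_mul, norm_prod]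
      exact (Finset.prod_eq_one fun j _ => by simp [(hnorm j).1.ne']).symm
    · obtain ⟨r, hr, he⟩ := hpos 1 norm_one
      rw [one_pow, div_one] at he
      rw [← eval_C (x := 1) (a := a.leadingCoeff), ← eval_mul, ← hfac, he]
      exact Complex.zero_lt_real.mpr hr
    · simpa using Finset.univ.prod_neg_mul_eval_one_pos η (fun j _ => norm_pos_iff.mp (hnorm j).1)
        (fun j _ h1 => (hnorm j).2.ne (by rw [h1, norm_one]))
  refine ⟨η, hinj, hnorm, ?_⟩
  rw [hfac, hlc, C_mul, C_pow, C_neg, C_1, map_prod, mul_assoc,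
    ← Finset.prod_mul_distrib]
end

section
/- Let n ≥ 1 and let b_1, b_2 ∈ ℂ[λ] be polynomials of degree at most n, each satisfying the reality condition λ^n·conj(b_i(1/conj(λ))) = b_i(λ) for all λ ∈ ℂ∖{0}. Then their Wronskian W = b_1'·b_2 − b_2'·b_1 satisfies λ^{2n−2}·conj(W(1/conj(λ))) = −W(λ) for all λ ∈ ℂ∖{0}; consequently the set of zeros of W in ℂ∖{0} is invariant under the map λ ↦ 1/conj(λ). -/
open Polynomial

private lemma eval_conj (p : Polynomial ℂ) (x : ℂ) :
    (starRingEnd ℂ) (p.eval x) = (p.map (starRingEnd ℂ)).eval ((starRingEnd ℂ) x) := by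
  rw [eval_map, eval₂_hom]

private lemma deriv_aux (n : ℕ) (b c : Polynomial ℂ)
    (h : ∀ l : ℂ, l ≠ 0 → b.eval l = l ^ n * c.eval l⁻¹) (l : ℂ) (hl : l ≠ 0) :
    (derivative b).eval l
      = ↑n * l ^ (n - 1) * c.eval l⁻¹
        + l ^ n * ((derivative c).eval l⁻¹ * (-(l ^ 2)⁻¹)) := by
  have h1 : HasDerivAt (fun x : ℂ => b.eval x) ((derivative b).eval l) l := b.hasDerivAt l
  have h2 : HasDerivAt (fun x : ℂ => x ^ n * c.eval x⁻¹)
      (↑n * l ^ (n - 1) * c.eval l⁻¹ + l ^ n * ((derivative c).eval l⁻¹ * (-(l ^ 2)⁻¹))) l :=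
    (hasDerivAt_pow n l).mul ((c.hasDerivAt l⁻¹).comp l (hasDerivAt_inv hl))
  have hev : (fun x : ℂ => b.eval x) =ᶠ[nhds l] fun x : ℂ => x ^ n * c.eval x⁻¹ := by
    filter_upwards [isOpen_compl_singleton.mem_nhds hl] with x hx using h x hx
  exact h1.unique (h2.congr_of_eventuallyEq hev)

theorem stmt5 (n : ℕ) (hn : 1 ≤ n) (b₁ b₂ : Polynomial ℂ)
    (hdeg1 : b₁.degree ≤ (n : ℕ)) (hdeg2 : b₂.degree ≤ (n : ℕ))
    (hreal1 : ∀ l : ℂ, l ≠ 0 →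
      l ^ n * (starRingEnd ℂ) (b₁.eval (((starRingEnd ℂ) l)⁻¹)) = b₁.eval l)
    (hreal2 : ∀ l : ℂ, l ≠ 0 →
      l ^ n * (starRingEnd ℂ) (b₂.eval (((starRingEnd ℂ) l)⁻¹)) = b₂.eval l) :
    (∀ l : ℂ, l ≠ 0 →
      l ^ (2 * n - 2) * (starRingEnd ℂ)
          ((derivative b₁ * b₂ - derivative b₂ * b₁).eval (((starRingEnd ℂ) l)⁻¹))
        = -(derivative b₁ * b₂ - derivative b₂ * b₁).eval l) ∧
    (∀ l : ℂ, l ≠ 0 →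
      (derivative b₁ * b₂ - derivative b₂ * b₁).eval l = 0 →
      (derivative b₁ * b₂ - derivative b₂ * b₁).eval (((starRingEnd ℂ) l)⁻¹) = 0) := by
  obtain ⟨m, rfl⟩ : ∃ m, n = m + 1 := ⟨n - 1, (Nat.succ_pred_eq_of_pos hn).symm⟩
  set c₁ := b₁.map (starRingEnd ℂ) with hc₁
  set c₂ := b₂.map (starRingEnd ℂ) with hc₂
  -- restate the reality conditions
  have key : ∀ (b : Polynomial ℂ),
      (∀ l : ℂ, l ≠ 0 →
        l ^ (m + 1) * (starRingEnd ℂ) (b.eval (((starRingEnd ℂ) l)⁻¹)) = b.eval l) →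
      ∀ l : ℂ, l ≠ 0 → b.eval l = l ^ (m + 1) * (b.map (starRingEnd ℂ)).eval l⁻¹ := by
    intro b hb l hl
    have := hb l hl
    rw [eval_conj] at this
    simp only [map_inv₀, Complex.conj_conj] at this
    exact this.symm
  have h1 := key b₁ hreal1
  have h2 := key b₂ hreal2
  have hd1 := deriv_aux (m + 1) b₁ c₁ h1
  have hd2 := deriv_aux (m + 1) b₂ c₂ h2
  have main : ∀ l : ℂ, l ≠ 0 →
      l ^ (2 * (m + 1) - 2) * (starRingEnd ℂ)
          ((derivative b₁ * b₂ - derivative b₂ * b₁).eval (((starRingEnd ℂ) l)⁻¹))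
        = -(derivative b₁ * b₂ - derivative b₂ * b₁).eval l := by
    intro l hl
    have hconj : (starRingEnd ℂ)
        ((derivative b₁ * b₂ - derivative b₂ * b₁).eval (((starRingEnd ℂ) l)⁻¹))
        = (derivative c₁).eval l⁻¹ * c₂.eval l⁻¹ - (derivative c₂).eval l⁻¹ * c₁.eval l⁻¹ := by
      rw [eval_conj]
      simp only [map_inv₀, Complex.conj_conj, Polynomial.map_sub, Polynomial.map_mul,
        eval_sub, eval_mul, derivative_map, hc₁, hc₂]
    rw [hconj]
    simp only [eval_sub, eval_mul]
    rw [hd1 l hl, hd2 l hl, h1 l hl, h2 l hl]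
    have h2m : 2 * (m + 1) - 2 = 2 * m := by omega
    have hm1 : m + 1 - 1 = m := by omega
    rw [h2m, hm1]
    field_simp
    ring
  refine ⟨main, fun l hl hW => ?_⟩
  have := main l hl
  rw [hW, neg_zero] at this
  have hl2 : l ^ (2 * (m + 1) - 2) ≠ 0 := pow_ne_zero _ hl
  have := (mul_eq_zero.mp this).resolve_left hl2
  exact (starRingEnd ℂ).injective (by simpa using this)
end

section
/- Let g ≥ 1. Let a ∈ ℂ[λ] satisfy the reality condition λ^{2g}·conj(a(1/conj(λ))) = a(λ), and let b_1, b_2 ∈ ℂ[λ] be coprime polynomials of degree exactly g+1, each satisfying the reality condition λ^{g+1}·conj(b_i(1/conj(λ))) = b_i(λ). Suppose c_1, c_2 ∈ ℂ[λ] satisfy c_1·b_2 − c_2·b_1 = a with deg c_1 ≤ g−1 and deg c_2 ≤ g. Then both c_1 and c_2 have degree at most g−1 and satisfy the reality condition λ^{g−1}·conj(c_j(1/conj(λ))) = c_j(λ) for all λ ∈ ℂ∖{0}. -/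
/-!
The reality condition of degree `N` says exactly that `p` is fixed by the conjugate reflection
`conjReflect N`, which is multiplicative: `conjReflect (M + N) (p * q) = conjReflect M p *
conjReflect N q`. Applying `conjReflect (2g + 1)` to `c₁ b₂ - c₂ b₁ = a`, and comparing with `λ`
times the same identity, gives `(λ c₁ - conjReflect g c₁) b₂ = (λ c₂ - conjReflect g c₂) b₁`.
The left factor has degree at most `g < deg b₁`, so coprimality forces
`λ c_j = conjReflect g c_j`, which says that `c_j` has degree at most `g - 1` and is real of
degree `g - 1`.
-/

open Polynomial

section ConjReflect

variable {K : Type*} [Field K] [StarRing K] {M N : ℕ} {p q : K[X]}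

/-- For `p.natDegree ≤ N` this is the polynomial `λ ↦ λ ^ N * conj (p (1 / conj λ))`. -/
noncomputable def conjReflect (N : ℕ) (p : K[X]) : K[X] := reflect N (p.map (starRingEnd K))

lemma natDegree_map_starRingEnd : (p.map (starRingEnd K)).natDegree = p.natDegree :=
  natDegree_map_eq_of_injective (starRingEnd K).injective _

lemma natDegree_conjReflect_le (hp : p.natDegree ≤ N) : (conjReflect N p).natDegree ≤ N :=
  natDegree_reflect_le.trans (max_le le_rfl (natDegree_map_starRingEnd.trans_le hp))

lemma eval_conjReflect (hp : p.natDegree ≤ N) {l : K} (hl : l ≠ 0) :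
    (conjReflect N p).eval l = l ^ N * starRingEnd K (p.eval (starRingEnd K l)⁻¹) := by
  have : Invertible l⁻¹ := invertibleOfNonzero (inv_ne_zero hl)
  have h := eval₂_reflect_mul_pow (RingHom.id K) l⁻¹ N (p.map (starRingEnd K))
    (natDegree_map_starRingEnd.trans_le hp)
  have hconj : (p.map (starRingEnd K)).eval l⁻¹ = starRingEnd K (p.eval (starRingEnd K l)⁻¹) := by
    rw [eval_map, ← eval₂_at_apply, map_inv₀, starRingEnd_self_apply]
  rw [invOf_eq_inv, inv_inv, ← eval, ← eval, hconj] at h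
  rw [conjReflect, ← h, inv_pow, mul_comm _ (l ^ N)⁻¹, mul_inv_cancel_left₀ (pow_ne_zero N hl)]

lemma conjReflect_eq_iff [Infinite K] (hp : p.natDegree ≤ N) :
    conjReflect N p = q ↔
      ∀ l : K, l ≠ 0 → l ^ N * starRingEnd K (p.eval (starRingEnd K l)⁻¹) = q.eval l := by
  refine ⟨fun h l hl => by rw [← h, eval_conjReflect hp hl], fun h => ?_⟩
  refine eq_of_infinite_eval_eq _ _ ((Set.finite_singleton 0).infinite_compl.mono fun l hl => ?_)
  rw [Set.mem_ofPred_eq, eval_conjReflect hp hl, h l hl]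

lemma conjReflect_mul (hp : p.natDegree ≤ M) (hq : q.natDegree ≤ N) :
    conjReflect (M + N) (p * q) = conjReflect M p * conjReflect N q := by
  rw [conjReflect, Polynomial.map_mul]
  exact reflect_mul _ _ (natDegree_map_starRingEnd.trans_le hp)
    (natDegree_map_starRingEnd.trans_le hq)

lemma conjReflect_sub : conjReflect N (p - q) = conjReflect N p - conjReflect N q := by
  simp only [conjReflect, Polynomial.map_sub, reflect_sub]

lemma conjReflect_succ (hp : p.natDegree ≤ N) : conjReflect (N + 1) p = X * conjReflect N p := by
  have h := conjReflect_mul (q := 1) hp (natDegree_one.trans_le zero_le_one)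
  rw [mul_one] at h
  rw [h, mul_comm]
  simp only [conjReflect, Polynomial.map_one, reflect_one, pow_one]

lemma natDegree_le_pred_and_conjReflect_pred_eq_self_of_X_mul_eq (hp : p.natDegree ≤ N)
    (h : X * p = conjReflect N p) : p.natDegree ≤ N - 1 ∧ conjReflect (N - 1) p = p := by
  rcases eq_or_ne p 0 with rfl | hp0
  · simp [conjReflect]
  have hdeg : p.natDegree + 1 ≤ N := by
    rw [← natDegree_X_mul hp0, h]
    exact natDegree_conjReflect_le hp
  obtain ⟨M, rfl⟩ : ∃ M, N = M + 1 := ⟨N - 1, by omega⟩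
  rw [conjReflect_succ (by omega)] at h
  exact ⟨by omega, (mul_left_cancel₀ X_ne_zero h).symm⟩

lemma X_mul_sub_conjReflect_mul_eq {a b₁ b₂ c₁ c₂ : K[X]} (hc₁ : c₁.natDegree ≤ N)
    (hc₂ : c₂.natDegree ≤ N) (hb₁ : b₁.natDegree ≤ N + 1) (hb₂ : b₂.natDegree ≤ N + 1)
    (hb₁_self : conjReflect (N + 1) b₁ = b₁) (hb₂_self : conjReflect (N + 1) b₂ = b₂)
    (ha_self : conjReflect (2 * N + 1) a = X * a) (heq : c₁ * b₂ - c₂ * b₁ = a) :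
    (X * c₁ - conjReflect N c₁) * b₂ = (X * c₂ - conjReflect N c₂) * b₁ := by
  have hXa : X * a = conjReflect N c₁ * b₂ - conjReflect N c₂ * b₁ := by
    rw [← ha_self, ← heq, conjReflect_sub, show 2 * N + 1 = N + (N + 1) by ring,
      conjReflect_mul hc₁ hb₂, conjReflect_mul hc₂ hb₁, hb₁_self, hb₂_self]
  linear_combination X * heq + hXa

end ConjReflect

lemma eq_zero_of_mul_eq_mul_of_isCoprime {R : Type*} [CommRing R] [IsDomain R] {p q u v : R[X]}
    (hpq : IsCoprime p q) (h : u * q = v * p) (hu : u.degree < p.degree) : u = 0 ∧ v = 0 := by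
  have hu0 : u = 0 :=
    eq_zero_of_dvd_of_degree_lt (hpq.dvd_of_dvd_mul_right ⟨v, by rw [h, mul_comm]⟩) hu
  rw [hu0, zero_mul, eq_comm, mul_eq_zero] at h
  exact ⟨hu0, h.resolve_right (ne_zero_of_degree_gt hu)⟩

theorem stmt8 (g : ℕ) (hg : 1 ≤ g) (a b₁ b₂ c₁ c₂ : Polynomial ℂ)
    (hareal : ∀ l : ℂ, l ≠ 0 →
      l ^ (2 * g) * (starRingEnd ℂ) (a.eval (((starRingEnd ℂ) l)⁻¹)) = a.eval l)
    (hdeg1 : b₁.degree = (g + 1 : ℕ)) (hdeg2 : b₂.degree = (g + 1 : ℕ))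
    (hcop : ∀ μ : ℂ, ¬ (b₁.eval μ = 0 ∧ b₂.eval μ = 0))
    (hreal1 : ∀ l : ℂ, l ≠ 0 →
      l ^ (g + 1) * (starRingEnd ℂ) (b₁.eval (((starRingEnd ℂ) l)⁻¹)) = b₁.eval l)
    (hreal2 : ∀ l : ℂ, l ≠ 0 →
      l ^ (g + 1) * (starRingEnd ℂ) (b₂.eval (((starRingEnd ℂ) l)⁻¹)) = b₂.eval l)
    (heq : c₁ * b₂ - c₂ * b₁ = a)
    (hc1 : c₁.degree ≤ ((g - 1 : ℕ) : ℕ)) (hc2 : c₂.degree ≤ (g : ℕ)) :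
    c₁.degree ≤ ((g - 1 : ℕ) : ℕ) ∧ c₂.degree ≤ ((g - 1 : ℕ) : ℕ) ∧
    (∀ l : ℂ, l ≠ 0 →
      l ^ (g - 1) * (starRingEnd ℂ) (c₁.eval (((starRingEnd ℂ) l)⁻¹)) = c₁.eval l) ∧
    (∀ l : ℂ, l ≠ 0 →
      l ^ (g - 1) * (starRingEnd ℂ) (c₂.eval (((starRingEnd ℂ) l)⁻¹)) = c₂.eval l) := by
  have hb₁ : b₁.natDegree = g + 1 := natDegree_eq_of_degree_eq_some hdeg1
  have hb₂ : b₂.natDegree = g + 1 := natDegree_eq_of_degree_eq_some hdeg2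
  have hc₁ : c₁.natDegree ≤ g - 1 := natDegree_le_iff_degree_le.2 hc1
  have hc₁g : c₁.natDegree ≤ g := hc₁.trans (Nat.sub_le g 1)
  have hc₂ : c₂.natDegree ≤ g := natDegree_le_iff_degree_le.2 hc2
  have ha : a.natDegree ≤ 2 * g + 1 := by
    rw [← heq]
    refine (natDegree_sub_le _ _).trans (max_le ?_ ?_) <;>
      refine natDegree_mul_le.trans ?_ <;> omega
  have hcoprime : IsCoprime b₁ b₂ :=
    (isCoprime_iff_aeval_ne_zero_of_isAlgClosed ℂ ℂ b₁ b₂).2 fun μ => by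
      simpa only [coe_aeval_eq_eval, ne_eq, ← not_and_or] using hcop μ
  have ha_self : conjReflect (2 * g + 1) a = X * a :=
    (conjReflect_eq_iff ha).2 fun l hl => by rw [eval_mul, eval_X, ← hareal l hl]; ring
  have hkey := X_mul_sub_conjReflect_mul_eq hc₁g hc₂ hb₁.le hb₂.le
    ((conjReflect_eq_iff hb₁.le).2 hreal1) ((conjReflect_eq_iff hb₂.le).2 hreal2) ha_self heq
  have hdeg : (X * c₁ - conjReflect g c₁).degree < b₁.degree := by
    have : (X * c₁ - conjReflect g c₁).natDegree ≤ g :=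
      (natDegree_sub_le _ _).trans (max_le (natDegree_mul_le.trans (by rw [natDegree_X]; omega))
        (natDegree_conjReflect_le hc₁g))
    rw [hdeg1]
    exact (natDegree_le_iff_degree_le.1 this).trans_lt (by exact_mod_cast g.lt_succ_self)
  obtain ⟨h₁, h₂⟩ := eq_zero_of_mul_eq_mul_of_isCoprime hcoprime hkey hdeg
  obtain ⟨-, hc₁_self⟩ :=
    natDegree_le_pred_and_conjReflect_pred_eq_self_of_X_mul_eq hc₁g (sub_eq_zero.1 h₁)
  obtain ⟨hc₂', hc₂_self⟩ :=
    natDegree_le_pred_and_conjReflect_pred_eq_self_of_X_mul_eq hc₂ (sub_eq_zero.1 h₂)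
  exact ⟨hc1, natDegree_le_iff_degree_le.1 hc₂',
    (conjReflect_eq_iff hc₁).1 hc₁_self, (conjReflect_eq_iff hc₂').1 hc₂_self⟩
end

section
/- Let g ≥ 0, let b_1, b_2 ∈ ℂ[λ] be coprime polynomials of degree exactly g+1 with b_1 having g+1 pairwise distinct roots, let a ∈ ℂ[λ] have degree at most 2g, and let c_1, c_2 ∈ ℂ[λ] be polynomials of degree at most g with c_1·b_2 − c_2·b_1 = a. Then the sum over the roots β of b_1 of a(β)/(b_1'(β)·b_2(β)) equals the coefficient of λ^g in c_1 divided by the leading coefficient of b_1. In particular, this sum is nonzero if and only if deg c_1 = g. -/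
open Polynomial

namespace Polynomial.Splits

variable {F : Type*} [Field F] [DecidableEq F] {q : F[X]}

theorem eval_derivative_of_mem_roots (hq : q.Splits) (hnodup : q.roots.Nodup) {β : F}
    (hβ : β ∈ q.roots) :
    q.derivative.eval β = q.leadingCoeff * ∏ γ ∈ q.roots.toFinset.erase β, (β - γ) := by
  have hval : q.roots.toFinset.val = q.roots := Multiset.dedup_eq_self.mpr hnodup
  conv_lhs => rw [hq.eq_prod_roots]
  rw [derivative_C_mul, eval_C_mul, eval_multiset_prod_X_sub_C_derivative hβ,
    Finset.prod_eq_multiset_prod, Finset.erase_val, hval]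

/-- Lagrange interpolation of `p` at the roots of `q`, compared at the coefficient of
`X ^ (deg q - 1)`. -/
theorem sum_roots_eval_div_eval_derivative (hq : q.Splits) (hnodup : q.roots.Nodup) {p : F[X]}
    (hp : p.degree < q.natDegree) :
    ∑ β ∈ q.roots.toFinset, p.eval β / q.derivative.eval β
      = p.coeff (q.natDegree - 1) / q.leadingCoeff := by
  have hcard : q.roots.toFinset.card = q.natDegree := by
    rw [Multiset.toFinset_card_of_nodup hnodup, hq.natDegree_eq_card_roots]
  rw [← hcard] at hp ⊢
  rw [Lagrange.coeff_eq_sum (v := id) Function.injective_id.injOn hp, Finset.sum_div]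
  refine Finset.sum_congr rfl fun β hβ => ?_
  rw [hq.eval_derivative_of_mem_roots hnodup (Multiset.mem_toFinset.mp hβ), div_mul_eq_div_div_swap]
  rfl

end Polynomial.Splits

theorem stmt10_general (g : ℕ) (b₁ b₂ a c₁ c₂ : Polynomial ℂ)
    (hdeg1 : b₁.degree = (g + 1 : ℕ))
    (hcop : ∀ μ : ℂ, ¬ (b₁.eval μ = 0 ∧ b₂.eval μ = 0))
    (hnodup : b₁.roots.Nodup)
    (hc1 : c₁.degree ≤ (g : ℕ))
    (heq : c₁ * b₂ - c₂ * b₁ = a) :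
    (∑ β ∈ b₁.roots.toFinset, a.eval β / ((derivative b₁).eval β * b₂.eval β))
      = c₁.coeff g / b₁.leadingCoeff ∧
    ((∑ β ∈ b₁.roots.toFinset, a.eval β / ((derivative b₁).eval β * b₂.eval β)) ≠ 0
      ↔ c₁.degree = (g : ℕ)) := by
  have hb₁ : b₁ ≠ 0 := ne_zero_of_degree_gt (n := ⊥) (by rw [hdeg1]; exact WithBot.bot_lt_coe _)
  have hnat : b₁.natDegree = g + 1 := natDegree_eq_of_degree_eq_some hdeg1
  have hterm : ∀ β ∈ b₁.roots.toFinset,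
      a.eval β / ((derivative b₁).eval β * b₂.eval β) = c₁.eval β / (derivative b₁).eval β := by
    intro β hβ
    have hroot : b₁.eval β = 0 := (mem_roots hb₁).mp (Multiset.mem_toFinset.mp hβ)
    have hb₂ : b₂.eval β ≠ 0 := fun h => hcop β ⟨hroot, h⟩
    rw [← heq, eval_sub, eval_mul, eval_mul, hroot, mul_zero, sub_zero, mul_div_mul_right _ _ hb₂]
  have hsum : (∑ β ∈ b₁.roots.toFinset, a.eval β / ((derivative b₁).eval β * b₂.eval β))
      = c₁.coeff g / b₁.leadingCoeff := by
    rw [Finset.sum_congr rfl hterm, (IsAlgClosed.splits b₁).sum_roots_eval_div_eval_derivative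
      hnodup (hc1.trans_lt (by rw [hnat]; exact_mod_cast g.lt_succ_self)), hnat, Nat.add_sub_cancel]
  refine ⟨hsum, ?_⟩
  rw [hsum, div_ne_zero_iff, and_iff_left (leadingCoeff_ne_zero.mpr hb₁)]
  exact ⟨degree_eq_of_le_of_coeff_ne_zero hc1, coeff_ne_zero_of_eq_degree⟩

theorem stmt10 (g : ℕ) (b₁ b₂ a c₁ c₂ : Polynomial ℂ)
    (hdeg1 : b₁.degree = (g + 1 : ℕ)) (hdeg2 : b₂.degree = (g + 1 : ℕ))
    (hcop : ∀ μ : ℂ, ¬ (b₁.eval μ = 0 ∧ b₂.eval μ = 0))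
    (hnodup : b₁.roots.Nodup)
    (ha : a.degree ≤ (2 * g : ℕ))
    (hc1 : c₁.degree ≤ (g : ℕ)) (hc2 : c₂.degree ≤ (g : ℕ))
    (heq : c₁ * b₂ - c₂ * b₁ = a) :
    (∑ β ∈ b₁.roots.toFinset, a.eval β / ((derivative b₁).eval β * b₂.eval β))
      = c₁.coeff g / b₁.leadingCoeff ∧
    ((∑ β ∈ b₁.roots.toFinset, a.eval β / ((derivative b₁).eval β * b₂.eval β)) ≠ 0
      ↔ c₁.degree = (g : ℕ)) :=
  stmt10_general g b₁ b₂ a c₁ c₂ hdeg1 hcop hnodup hc1 heq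
end

section
/- Let b_1, b_2 ∈ ℂ[λ] be coprime nonconstant polynomials, each having only simple roots, and let a ∈ ℂ[λ] have degree at most deg b_1 + deg b_2 − 2. Then the sum over the roots β of b_1 of a(β)/(b_1'(β)·b_2(β)) equals minus the sum over the roots β of b_2 of a(β)/(b_2'(β)·b_1(β)). -/
/-!
For `p = b₁ * b₂`, which has simple roots, `p'(β) = b₁'(β) b₂(β)` at a root `β` of `b₁` and
symmetrically at the roots of `b₂`, so the claim is `∑_{p(β) = 0} a(β) / p'(β) = 0`. Since
`p'(β) = lc(p) ∏_{γ ≠ β} (β - γ)`, this sum is `lc(p)⁻¹` times the coefficient of `X^(deg p - 1)` in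
the Lagrange interpolant of `a` at the roots of `p`. That interpolant is `a` itself, and
`deg a ≤ deg p - 2`.
-/

open Polynomial Finset

namespace Polynomial

theorem eval_derivative_mul_of_isRoot_left {R : Type*} [CommRing R] {p q : R[X]} {β : R}
    (hβ : p.IsRoot β) : (derivative (p * q)).eval β = (derivative p).eval β * q.eval β := by
  simp [derivative_mul, hβ.eq_zero]

variable {F : Type*} [Field F] [DecidableEq F]

theorem sum_div_eval_derivative_nodal_eq_zero (s : Finset F) {a : F[X]}
    (ha : a.degree < ((#s - 1 : ℕ) : WithBot ℕ)) :
    ∑ β ∈ s, a.eval β / (derivative (Lagrange.nodal s id)).eval β = 0 := by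
  have ha' : a.degree < #s := ha.trans_le (by exact_mod_cast Nat.sub_le _ _)
  rw [← coeff_eq_zero_of_degree_lt ha, Lagrange.coeff_eq_sum Function.injective_id.injOn ha']
  refine sum_congr rfl fun β hβ => ?_
  rw [← id_eq β, Lagrange.eval_nodal_derivative_eval_node_eq hβ, Lagrange.eval_nodal]
  rfl

theorem eq_C_leadingCoeff_mul_nodal_roots {p : F[X]} (hp : p.Splits) (hnd : p.roots.Nodup) :
    p = C p.leadingCoeff * Lagrange.nodal p.roots.toFinset id := by
  conv_lhs => rw [hp.eq_prod_roots]
  rw [Lagrange.nodal, Finset.prod, Multiset.toFinset_val, hnd.dedup]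
  rfl

theorem sum_roots_div_eval_derivative_eq_zero {p a : F[X]} (hp : p.Splits) (hnd : p.roots.Nodup)
    (ha : a.degree < ((p.natDegree - 1 : ℕ) : WithBot ℕ)) :
    ∑ β ∈ p.roots.toFinset, a.eval β / (derivative p).eval β = 0 := by
  have hcard : #p.roots.toFinset = p.natDegree := by
    rw [Multiset.toFinset_card_of_nodup hnd, splits_iff_card_roots.mp hp]
  have hterm : ∀ β, a.eval β / (derivative p).eval β
      = a.eval β / (derivative (Lagrange.nodal p.roots.toFinset id)).eval β / p.leadingCoeff := by
    intro β
    conv_lhs => rw [eq_C_leadingCoeff_mul_nodal_roots hp hnd]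
    rw [derivative_C_mul, eval_mul, eval_C, div_div, mul_comm]
  rw [← hcard] at ha
  simp_rw [hterm, ← sum_div, sum_div_eval_derivative_nodal_eq_zero _ ha, zero_div]

end Polynomial

theorem stmt11 (b₁ b₂ a : Polynomial ℂ)
    (hb1 : 0 < b₁.degree) (hb2 : 0 < b₂.degree)
    (h1 : b₁.roots.Nodup) (h2 : b₂.roots.Nodup)
    (hcop : ∀ μ : ℂ, ¬ (b₁.eval μ = 0 ∧ b₂.eval μ = 0))
    (ha : a.degree ≤ ((b₁.natDegree + b₂.natDegree - 2 : ℕ) : ℕ)) :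
    ∑ β ∈ b₁.roots.toFinset, a.eval β / ((derivative b₁).eval β * b₂.eval β)
      = - ∑ β ∈ b₂.roots.toFinset, a.eval β / ((derivative b₂).eval β * b₁.eval β) := by
  have hb₁ : b₁ ≠ 0 := ne_zero_of_degree_gt hb1
  have hb₂ : b₂ ≠ 0 := ne_zero_of_degree_gt hb2
  have hroots : (b₁ * b₂).roots = b₁.roots + b₂.roots := roots_mul (mul_ne_zero hb₁ hb₂)
  have hdisj : Disjoint b₁.roots b₂.roots := Multiset.disjoint_left.mpr fun hβ₁ hβ₂ =>
    hcop _ ⟨isRoot_of_mem_roots hβ₁, isRoot_of_mem_roots hβ₂⟩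
  have hdeg : a.degree < (((b₁ * b₂).natDegree - 1 : ℕ) : WithBot ℕ) := by
    have hn₁ := natDegree_pos_iff_degree_pos.mpr hb1
    have hn₂ := natDegree_pos_iff_degree_pos.mpr hb2
    refine ha.trans_lt ?_
    rw [natDegree_mul hb₁ hb₂]
    exact_mod_cast (by omega)
  have hsum := sum_roots_div_eval_derivative_eq_zero (IsAlgClosed.splits _)
    (hroots ▸ Multiset.nodup_add.mpr ⟨h1, h2, hdisj⟩) hdeg
  rw [hroots, Multiset.toFinset_add, sum_union (Multiset.disjoint_toFinset.mpr hdisj)] at hsum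
  refine eq_neg_of_add_eq_zero_left (Eq.trans ?_ hsum)
  congr 1 <;> refine sum_congr rfl fun β hβ => ?_
  · rw [eval_derivative_mul_of_isRoot_left (isRoot_of_mem_roots (Multiset.mem_toFinset.mp hβ))]
  · rw [mul_comm b₁, eval_derivative_mul_of_isRoot_left
      (isRoot_of_mem_roots (Multiset.mem_toFinset.mp hβ))]
end

section
/- Let g ≥ 0, let b_1, b_2 ∈ ℂ[λ] be coprime polynomials of degree exactly g+1, and let a ∈ ℂ[λ] have degree at most 2g. Let A, B, C, D ∈ ℝ with AD − BC ≠ 0, and set b̃_1 = A·b_1 + B·b_2, b̃_2 = C·b_1 + D·b_2. Assume that b_1 and b̃_1 each have degree exactly g+1 and each have g+1 pairwise distinct roots. Then the sum over the roots β of b̃_1 of a(β)/(b̃_1'(β)·b̃_2(β)) equals 1/(AD − BC) times the sum over the roots β of b_1 of a(β)/(b_1'(β)·b_2(β)). -/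
/-!
Since `b₁, b₂` are coprime and `deg a < deg b₁ + deg b₂`, partial fractions give
`a = a₁ b₂ + a₂ b₁` with `deg aᵢ ≤ g`. At a root `β` of `b₁` the summand is `a₁(β) / b₁'(β)`,
and Lagrange interpolation at the `g + 1` simple roots of `b₁` turns the sum into
`coeff_g a₁ / lc b₁`. In the new basis the same `a` decomposes as `ã₁ b̃₂ + ã₂ b̃₁` with
`ã₁ = (A a₁ - B a₂) / (AD - BC)`. Finally `deg a ≤ 2g` makes the coefficient of `λ^(2g+1)`
vanish, `coeff_g a₁ · lc b₂ + coeff_g a₂ · lc b₁ = 0`, and this is exactly what makes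
`coeff_g (A a₁ - B a₂) / lc (A b₁ + B b₂) = coeff_g a₁ / lc b₁`.
-/

open Polynomial Finset

theorem IsCoprime.smul_add_smul {R S : Type*} [CommRing R] [CommRing S] [Algebra R S]
    {x y : S} (h : IsCoprime x y) {a b c d : R} (hdet : IsUnit (a * d - b * c)) :
    IsCoprime (a • x + b • y) (c • x + d • y) := by
  obtain ⟨u, v, huv⟩ := h
  obtain ⟨e, he⟩ := hdet.exists_left_inv
  refine ⟨e • (d • u - c • v), e • (a • v - b • u), ?_⟩
  have he' := congrArg (algebraMap R S) he
  simp only [Algebra.smul_def, map_mul, map_sub, map_one] at he' ⊢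
  linear_combination (algebraMap R S e * (algebraMap R S a * algebraMap R S d -
    algebraMap R S b * algebraMap R S c)) * huv + he'

theorem mul_add_mul_eq_smul_add_smul {K S : Type*} [Field K] [CommRing S] [Algebra K S]
    {x y u v : S} {a b c d : K} (hdet : a * d - b * c ≠ 0) :
    u * y + v * x = ((a * d - b * c)⁻¹ • (a • u - b • v)) * (c • x + d • y)
      + ((a * d - b * c)⁻¹ • (d • v - c • u)) * (a • x + b • y) := by
  have he := congrArg (algebraMap K S) (inv_mul_cancel₀ hdet)
  simp only [Algebra.smul_def, map_mul, map_sub, map_one] at he ⊢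
  linear_combination (-(u * y + v * x)) * he

namespace Polynomial

theorem coeff_mul_add_mul_eq_zero {R : Type*} [Semiring R] {p q a a₁ a₂ : R[X]} {m n : ℕ}
    (h₁ : a₁.natDegree ≤ m) (h₂ : a₂.natDegree ≤ m) (hp : p.natDegree ≤ n)
    (hq : q.natDegree ≤ n) (ha : a = a₁ * q + a₂ * p) (hdeg : a.degree < ↑(m + n)) :
    a₁.coeff m * q.coeff n + a₂.coeff m * p.coeff n = 0 := by
  rw [← coeff_mul_add_eq_of_natDegree_le h₁ hq, ← coeff_mul_add_eq_of_natDegree_le h₂ hp,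
    ← coeff_add, ← ha]
  exact coeff_eq_zero_of_degree_lt hdeg

variable {K : Type*} [Field K]

theorem exists_eq_mul_add_mul_of_isCoprime {p q a : K[X]}
    (hpq : IsCoprime p q) (ha : a.degree < p.degree + q.degree) :
    ∃ a₁ a₂ : K[X], a₁.degree < p.degree ∧ a₂.degree < q.degree ∧ a = a₁ * q + a₂ * p := by
  obtain ⟨u, v, huv⟩ := hpq
  have hp0 : p ≠ 0 := by rintro rfl; simp at ha
  have hq0 : q ≠ 0 := by rintro rfl; simp at ha
  set a₂ := a * u % q
  set a₁ := a * u / q * p + a * v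
  have hdecomp : a = a₁ * q + a₂ * p := by
    linear_combination (-a) * huv - p * EuclideanDomain.div_add_mod (a * u) q
  have ha₂ : a₂.degree < q.degree := degree_mod_lt _ hq0
  refine ⟨a₁, a₂, ?_, ha₂, hdecomp⟩
  have : a₁.degree + q.degree < p.degree + q.degree := by
    rw [← degree_mul, eq_sub_of_add_eq hdecomp.symm]
    refine (degree_sub_le _ _).trans_lt (max_lt ha ?_)
    rw [degree_mul, add_comm p.degree]
    exact WithBot.add_lt_add_right (degree_ne_bot.mpr hp0) ha₂
  exact lt_of_add_lt_add_right this

theorem coeff_smul_sub_smul_div_coeff_smul_add_smul {p q a₁ a₂ : K[X]}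
    {A B : K} {m n : ℕ} (hco : a₁.coeff m * q.coeff n + a₂.coeff m * p.coeff n = 0)
    (hp : p.coeff n ≠ 0) (hp' : (A • p + B • q).coeff n ≠ 0) :
    (A • a₁ - B • a₂).coeff m / (A • p + B • q).coeff n = a₁.coeff m / p.coeff n := by
  simp only [coeff_add, coeff_sub, coeff_smul, smul_eq_mul] at hp' ⊢
  field_simp
  linear_combination (-B) * hco

theorem sum_roots_eval_div_eval_derivative [DecidableEq K] {p f : K[X]} (hp : p.Splits)
    (hroots : p.roots.Nodup) (hf : f.degree < p.degree) :
    ∑ β ∈ p.roots.toFinset, f.eval β / (derivative p).eval β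
      = f.coeff (p.natDegree - 1) / p.leadingCoeff := by
  have hp0 : p ≠ 0 := by rintro rfl; simp at hf
  set s := p.roots.toFinset
  have hs : s.val = p.roots := hroots.dedup
  have hcard : #s = p.natDegree := by
    rw [← splits_iff_card_roots.mp hp, ← hs, Finset.card_val]
  have hnodal : p = C p.leadingCoeff * Lagrange.nodal s id := by
    conv_lhs => rw [hp.eq_prod_roots]
    rw [Lagrange.nodal_eq, Finset.prod_eq_multiset_prod, hs]
    rfl
  have hderiv : ∀ β ∈ s,
      (derivative p).eval β = p.leadingCoeff * ∏ γ ∈ s.erase β, (β - γ) := by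
    intro β hβ
    conv_lhs => rw [hnodal, derivative_C_mul, eval_mul, eval_C]
    exact congrArg _ <|
      (Lagrange.eval_nodal_derivative_eval_node_eq (v := id) hβ).trans Lagrange.eval_nodal
  rw [← hcard, Lagrange.coeff_eq_sum (v := id) (Set.injOn_id _)
      (by rwa [hcard, ← degree_eq_natDegree hp0]), Finset.sum_div]
  refine Finset.sum_congr rfl fun β hβ => ?_
  rw [hderiv β hβ, div_div, mul_comm]
  rfl

theorem sum_roots_eval_div_eval_derivative_mul [DecidableEq K]
    {p q a a₁ a₂ : K[X]} (hp : p.Splits) (hroots : p.roots.Nodup) (hpq : IsCoprime p q)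
    (ha₁ : a₁.degree < p.degree) (ha : a = a₁ * q + a₂ * p) :
    ∑ β ∈ p.roots.toFinset, a.eval β / ((derivative p).eval β * q.eval β)
      = a₁.coeff (p.natDegree - 1) / p.leadingCoeff := by
  rw [← sum_roots_eval_div_eval_derivative hp hroots ha₁]
  refine Finset.sum_congr rfl fun β hβ => ?_
  have hpβ : p.eval β = 0 := (mem_roots'.mp (Multiset.mem_toFinset.mp hβ)).2
  have hqβ : q.eval β ≠ 0 := by simpa [hpβ] using aeval_ne_zero_of_isCoprime hpq β
  rw [ha, eval_add, eval_mul, eval_mul, hpβ, mul_zero, add_zero, mul_div_mul_right _ _ hqβ]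

theorem sum_roots_smul_add_smul [DecidableEq K] {p q a : K[X]} {n : ℕ}
    (hp : p.degree = ↑(n + 1)) (hq : q.degree = ↑(n + 1)) (hpq : IsCoprime p q)
    (ha : a.degree ≤ ↑(2 * n)) {A B C D : K} (hdet : A * D - B * C ≠ 0)
    (hp_splits : p.Splits) (hp_roots : p.roots.Nodup)
    (hp' : (A • p + B • q).degree = ↑(n + 1)) (hp'_splits : (A • p + B • q).Splits)
    (hp'_roots : (A • p + B • q).roots.Nodup) :
    ∑ β ∈ (A • p + B • q).roots.toFinset,
        a.eval β / ((derivative (A • p + B • q)).eval β * (C • p + D • q).eval β)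
      = (A * D - B * C)⁻¹ *
        ∑ β ∈ p.roots.toFinset, a.eval β / ((derivative p).eval β * q.eval β) := by
  obtain ⟨a₁, a₂, ha₁, ha₂, hdecomp⟩ := exists_eq_mul_add_mul_of_isCoprime hpq
    (ha.trans_lt (by rw [hp, hq]; norm_cast; omega))
  have ha₂' : a₂.degree < p.degree := ha₂.trans_eq (hq.trans hp.symm)
  have hã₁ : (A • a₁ - B • a₂).degree < (A • p + B • q).degree := by
    rw [hp', ← hp]
    exact (degree_sub_le _ _).trans_lt
      (max_lt ((degree_smul_le _ _).trans_lt ha₁) ((degree_smul_le _ _).trans_lt ha₂'))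
  rw [sum_roots_eval_div_eval_derivative_mul hp'_splits hp'_roots (hpq.smul_add_smul hdet.isUnit)
      ((degree_smul_le _ _).trans_lt hã₁) (hdecomp.trans (mul_add_mul_eq_smul_add_smul hdet)),
    sum_roots_eval_div_eval_derivative_mul hp_splits hp_roots hpq ha₁ hdecomp]
  have hn := natDegree_eq_of_degree_eq_some hp
  have hn' := natDegree_eq_of_degree_eq_some hp'
  have natDegree_le {f : K[X]} (hf : f.degree < p.degree) : f.natDegree ≤ n :=
    natDegree_le_iff_coeff_eq_zero.2 fun _ hN =>
      coeff_eq_zero_of_degree_lt (hf.trans_le (by rw [hp]; exact_mod_cast hN))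
  have hco := coeff_mul_add_mul_eq_zero (natDegree_le ha₁) (natDegree_le ha₂') hn.le
    (natDegree_eq_of_degree_eq_some hq).le hdecomp (ha.trans_lt (by norm_cast; omega))
  have hlc : p.leadingCoeff ≠ 0 :=
    leadingCoeff_ne_zero.mpr (ne_zero_of_natDegree_gt (n := 0) (by omega))
  have hlc' : (A • p + B • q).leadingCoeff ≠ 0 :=
    leadingCoeff_ne_zero.mpr (ne_zero_of_natDegree_gt (n := 0) (by omega))
  simp only [leadingCoeff, hn, hn', Nat.add_sub_cancel] at hlc hlc' ⊢
  rw [coeff_smul, smul_eq_mul, mul_div_assoc,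
    coeff_smul_sub_smul_div_coeff_smul_add_smul hco hlc hlc']

end Polynomial

theorem stmt12 (g : ℕ) (b₁ b₂ a : Polynomial ℂ)
    (hdeg1 : b₁.degree = (g + 1 : ℕ)) (hdeg2 : b₂.degree = (g + 1 : ℕ))
    (hcop : ∀ μ : ℂ, ¬ (b₁.eval μ = 0 ∧ b₂.eval μ = 0))
    (ha : a.degree ≤ (2 * g : ℕ))
    (A B C₀ D : ℝ) (hdet : A * D - B * C₀ ≠ 0)
    (hnodup1 : b₁.roots.Nodup)
    (hdegt : ((A : ℂ) • b₁ + (B : ℂ) • b₂).degree = (g + 1 : ℕ))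
    (hnodupt : ((A : ℂ) • b₁ + (B : ℂ) • b₂).roots.Nodup) :
    ∑ β ∈ ((A : ℂ) • b₁ + (B : ℂ) • b₂).roots.toFinset,
        a.eval β / ((derivative ((A : ℂ) • b₁ + (B : ℂ) • b₂)).eval β *
          ((C₀ : ℂ) • b₁ + (D : ℂ) • b₂).eval β)
      = (1 / ((A * D - B * C₀ : ℝ) : ℂ)) *
        ∑ β ∈ b₁.roots.toFinset, a.eval β / ((derivative b₁).eval β * b₂.eval β) := by
  have hcop' : IsCoprime b₁ b₂ := (isCoprime_iff_aeval_ne_zero_of_isAlgClosed ℂ ℂ b₁ b₂).2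
    fun μ => by simpa only [coe_aeval_eq_eval, not_and_or] using hcop μ
  have hdet' : (A : ℂ) * D - B * C₀ ≠ 0 := by exact_mod_cast hdet
  rw [sum_roots_smul_add_smul hdeg1 hdeg2 hcop' ha hdet' (IsAlgClosed.splits _) hnodup1 hdegt
    (IsAlgClosed.splits _) hnodupt]
  push_cast
  rw [one_div]
end

section
/- Let g ≥ 0, let b_1, b_2 ∈ ℂ[λ] be coprime polynomials of degree at most g+1, let a ∈ ℂ[λ] have degree at most 2g, and set W = b_1'·b_2 − b_2'·b_1. Let p, q ∈ ℂ and assume that each of the polynomials b_1 − p·b_2 and b_1 − q·b_2 has degree exactly g+1 and has g+1 pairwise distinct roots. Then W is nonzero at every root of b_1 − p·b_2 and of b_1 − q·b_2, and the sum over the roots β of b_1 − p·b_2 of a(β)/W(β) equals the sum over the roots β of b_1 − q·b_2 of a(β)/W(β). (That is, the sum of a/W over the fibre f^{−1}(p) of f = b_1/b_2 is independent of p.) -/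
/-!
Write `F = b₁ - p b₂`, `G = b₁ - q b₂` with `p ≠ q`, and `W = W(b₂, b₁)`. The Wronskian does not
change under `b₁ ↦ b₁ - c b₂`, so at a root `β` of `F` we get `W(β) = b₂(β) F'(β)`, and since
`G(β) = (p - q) b₂(β)` also `(FG)'(β) = (p - q) W(β)`; symmetrically `(FG)'(β) = (q - p) W(β)`
at the roots of `G`. Coprimality keeps `b₂` nonzero at these roots and makes the roots of `F` and
`G` disjoint, so `FG` has simple roots. Because `deg a ≤ deg (FG) - 2`, the residue sum
`∑ a(β) / (FG)'(β)` over them vanishes: by Lagrange interpolation it is, up to the leading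
coefficient of `FG`, the coefficient of `X ^ (deg (FG) - 1)` in `a`. Split along the roots of `F`
and of `G`, this residue sum is the difference of the two sums of `a / W`, divided by `p - q`.
-/

open Polynomial Finset

variable {K : Type*} [Field K]

namespace Lagrange

theorem sum_div_eval_derivative_nodal_eq_zero [DecidableEq K] (s : Finset K) {r : K[X]}
    (hr : r.degree < ↑(#s - 1)) :
    ∑ x ∈ s, r.eval x / (derivative (nodal s id)).eval x = 0 := by
  have hinj : Set.InjOn (id : K → K) s := Function.injective_id.injOn
  rw [← coeff_eq_zero_of_degree_lt hr,
    coeff_eq_sum hinj (hr.trans_le (by exact_mod_cast Nat.sub_le _ _))]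
  refine sum_congr rfl fun x hx => ?_
  erw [eval_nodal_derivative_eval_node_eq (v := id) hx, eval_nodal]
  rfl

end Lagrange

namespace Polynomial

theorem Splits.eq_C_leadingCoeff_mul_nodal [DecidableEq K] {h : K[X]} (hh : h.Splits)
    (hnd : h.roots.Nodup) : h = C h.leadingCoeff * Lagrange.nodal h.roots.toFinset id := by
  conv_lhs => rw [hh.eq_prod_roots]
  rw [Lagrange.nodal_eq, prod_eq_multiset_prod, Multiset.toFinset_val,
    Multiset.dedup_eq_self.mpr hnd]
  rfl

theorem sum_roots_div_eval_derivative_eq_zero_s13 [DecidableEq K] {h r : K[X]} (hh : h.Splits)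
    (hnd : h.roots.Nodup) (hr : r.degree + 2 ≤ h.degree) :
    ∑ x ∈ h.roots.toFinset, r.eval x / (derivative h).eval x = 0 := by
  rcases eq_or_ne r 0 with rfl | hr0
  · simp
  have hh0 : h ≠ 0 := by rintro rfl; simp [degree_eq_natDegree hr0] at hr
  have hcard : #h.roots.toFinset = h.natDegree := by
    rw [Multiset.toFinset_card_of_nodup hnd, hh.natDegree_eq_card_roots]
  have hr' : r.degree < ↑(#h.roots.toFinset - 1) := by
    rw [degree_eq_natDegree hr0, degree_eq_natDegree hh0] at hr
    have hnat : r.natDegree + 2 ≤ h.natDegree := by exact_mod_cast hr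
    rw [hcard, degree_eq_natDegree hr0]
    exact_mod_cast (by omega : r.natDegree < h.natDegree - 1)
  conv_lhs => enter [2, x, 2]; rw [hh.eq_C_leadingCoeff_mul_nodal hnd]
  simp only [derivative_C_mul, eval_mul, eval_C, div_mul_eq_div_div_swap, ← sum_div,
    Lagrange.sum_div_eval_derivative_nodal_eq_zero _ hr', zero_div]

theorem eval_derivative_ne_zero_of_nodup_roots {h : K[X]} (hh : h.Splits) (h0 : h ≠ 0)
    (hnd : h.roots.Nodup) {x : K} (hx : h.eval x = 0) : (derivative h).eval x ≠ 0 :=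
  ((nodup_roots_iff_of_splits h0 hh).mp hnd).eval₂_derivative_ne_zero (RingHom.id K) hx

section Wronskian

variable {R : Type*} [CommRing R]

theorem wronskian_sub_C_mul_right (a b : R[X]) (c : R) :
    wronskian a (b - C c * a) = wronskian a b := by
  simp only [wronskian, derivative_sub, derivative_C_mul]
  ring

theorem eval_wronskian_of_eval_eq_zero (a : R[X]) {b : R[X]} {x : R}
    (hb : b.eval x = 0) : (wronskian a b).eval x = a.eval x * (derivative b).eval x := by
  simp [wronskian, hb]

end Wronskian

section Pencil

variable {b₁ b₂ : K[X]}

theorem eval_ne_zero_of_eval_sub_C_mul_eq_zero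
    (hcop : ∀ μ : K, ¬ (b₁.eval μ = 0 ∧ b₂.eval μ = 0)) {c x : K}
    (hx : (b₁ - C c * b₂).eval x = 0) : b₂.eval x ≠ 0 := by
  intro h₂
  simp only [eval_sub, eval_mul, eval_C, h₂, mul_zero, sub_zero] at hx
  exact hcop x ⟨hx, h₂⟩

theorem eval_wronskian_ne_zero_of_eval_sub_C_mul_eq_zero
    (hcop : ∀ μ : K, ¬ (b₁.eval μ = 0 ∧ b₂.eval μ = 0)) {c x : K}
    (hs : (b₁ - C c * b₂).Splits) (h0 : b₁ - C c * b₂ ≠ 0) (hnd : (b₁ - C c * b₂).roots.Nodup)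
    (hx : (b₁ - C c * b₂).eval x = 0) : (wronskian b₂ b₁).eval x ≠ 0 := by
  rw [← wronskian_sub_C_mul_right b₂ b₁ c, eval_wronskian_of_eval_eq_zero b₂ hx]
  exact mul_ne_zero (eval_ne_zero_of_eval_sub_C_mul_eq_zero hcop hx)
    (eval_derivative_ne_zero_of_nodup_roots hs h0 hnd hx)

theorem disjoint_roots_sub_C_mul
    (hcop : ∀ μ : K, ¬ (b₁.eval μ = 0 ∧ b₂.eval μ = 0)) {p q : K} (hpq : p ≠ q) :
    Disjoint (b₁ - C p * b₂).roots (b₁ - C q * b₂).roots := by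
  refine Multiset.disjoint_left.mpr fun {x} hp hq => ?_
  have hpx := (mem_roots'.mp hp).2
  have hqx := (mem_roots'.mp hq).2
  have : (q - p) * b₂.eval x = 0 := by
    simp only [IsRoot.def, eval_sub, eval_mul, eval_C] at hpx hqx
    linear_combination hpx - hqx
  exact eval_ne_zero_of_eval_sub_C_mul_eq_zero hcop hpx
    ((mul_eq_zero.mp this).resolve_left (sub_ne_zero.mpr hpq.symm))

theorem eval_derivative_mul_sub_C_mul {p x : K}
    (hx : (b₁ - C p * b₂).eval x = 0) (q : K) :
    (derivative ((b₁ - C p * b₂) * (b₁ - C q * b₂))).eval x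
      = (p - q) * (wronskian b₂ b₁).eval x := by
  rw [← wronskian_sub_C_mul_right b₂ b₁ p, eval_wronskian_of_eval_eq_zero b₂ hx]
  simp only [derivative_mul, eval_add, eval_mul, hx, zero_mul, add_zero]
  simp only [eval_sub, eval_mul, eval_C] at hx ⊢
  linear_combination (derivative (b₁ - C p * b₂)).eval x * hx

theorem sum_roots_sub_C_mul_div_eval_wronskian_eq [DecidableEq K] {a : K[X]}
    (hcop : ∀ μ : K, ¬ (b₁.eval μ = 0 ∧ b₂.eval μ = 0)) {p q : K}
    (hps : (b₁ - C p * b₂).Splits) (hp0 : b₁ - C p * b₂ ≠ 0)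
    (hpnd : (b₁ - C p * b₂).roots.Nodup)
    (hqs : (b₁ - C q * b₂).Splits) (hq0 : b₁ - C q * b₂ ≠ 0)
    (hqnd : (b₁ - C q * b₂).roots.Nodup)
    (ha : a.degree + 2 ≤ (b₁ - C p * b₂).degree + (b₁ - C q * b₂).degree) :
    ∑ x ∈ (b₁ - C p * b₂).roots.toFinset, a.eval x / (wronskian b₂ b₁).eval x
      = ∑ x ∈ (b₁ - C q * b₂).roots.toFinset, a.eval x / (wronskian b₂ b₁).eval x := by
  rcases eq_or_ne p q with rfl | hpq
  · rfl
  set F := b₁ - C p * b₂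
  set G := b₁ - C q * b₂
  have hdisj : Disjoint F.roots G.roots := disjoint_roots_sub_C_mul hcop hpq
  have hroots : (F * G).roots = F.roots + G.roots := roots_mul (mul_ne_zero hp0 hq0)
  have hres := sum_roots_div_eval_derivative_eq_zero_s13 (hps.mul hqs)
    (by rw [hroots]; exact Multiset.nodup_add.mpr ⟨hpnd, hqnd, hdisj⟩) (r := a)
    (by rwa [degree_mul])
  rw [hroots, Multiset.toFinset_add, sum_union (Multiset.disjoint_toFinset.mpr hdisj)] at hres
  have hF : ∑ x ∈ F.roots.toFinset, a.eval x / (derivative (F * G)).eval x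
      = (∑ x ∈ F.roots.toFinset, a.eval x / (wronskian b₂ b₁).eval x) / (p - q) := by
    rw [sum_div]
    refine sum_congr rfl fun x hx => ?_
    rw [eval_derivative_mul_sub_C_mul (mem_roots'.mp (Multiset.mem_toFinset.mp hx)).2,
      div_mul_eq_div_div_swap]
  have hG : ∑ x ∈ G.roots.toFinset, a.eval x / (derivative (F * G)).eval x
      = (∑ x ∈ G.roots.toFinset, a.eval x / (wronskian b₂ b₁).eval x) / (q - p) := by
    rw [sum_div, mul_comm F G]
    refine sum_congr rfl fun x hx => ?_
    rw [eval_derivative_mul_sub_C_mul (mem_roots'.mp (Multiset.mem_toFinset.mp hx)).2,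
      div_mul_eq_div_div_swap]
  rw [hF, hG, ← neg_sub p q, div_neg, ← sub_eq_add_neg, ← sub_div, div_eq_zero_iff,
    sub_eq_zero] at hres
  exact hres.resolve_right (sub_ne_zero.mpr hpq)

end Pencil

end Polynomial

theorem stmt13_general (g : ℕ) (b₁ b₂ a : Polynomial ℂ)
    (hcop : ∀ μ : ℂ, ¬ (b₁.eval μ = 0 ∧ b₂.eval μ = 0))
    (ha : a.degree ≤ (2 * g : ℕ))
    (p q : ℂ)
    (hdegp : (b₁ - C p * b₂).degree = (g + 1 : ℕ))
    (hnodupp : (b₁ - C p * b₂).roots.Nodup)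
    (hdegq : (b₁ - C q * b₂).degree = (g + 1 : ℕ))
    (hnodupq : (b₁ - C q * b₂).roots.Nodup) :
    (∀ β : ℂ, (b₁ - C p * b₂).eval β = 0 →
      (derivative b₁ * b₂ - derivative b₂ * b₁).eval β ≠ 0) ∧
    (∀ β : ℂ, (b₁ - C q * b₂).eval β = 0 →
      (derivative b₁ * b₂ - derivative b₂ * b₁).eval β ≠ 0) ∧
    ∑ β ∈ (b₁ - C p * b₂).roots.toFinset,
        a.eval β / (derivative b₁ * b₂ - derivative b₂ * b₁).eval β
      = ∑ β ∈ (b₁ - C q * b₂).roots.toFinset,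
          a.eval β / (derivative b₁ * b₂ - derivative b₂ * b₁).eval β := by
  have hW : derivative b₁ * b₂ - derivative b₂ * b₁ = wronskian b₂ b₁ := by
    rw [wronskian]; ring
  have hp0 : b₁ - C p * b₂ ≠ 0 := ne_zero_of_coe_le_degree hdegp.ge
  have hq0 : b₁ - C q * b₂ ≠ 0 := ne_zero_of_coe_le_degree hdegq.ge
  have hdeg : a.degree + 2 ≤ (b₁ - C p * b₂).degree + (b₁ - C q * b₂).degree := by
    rw [hdegp, hdegq]
    calc a.degree + 2 ≤ ((2 * g : ℕ) : WithBot ℕ) + 2 := by gcongr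
      _ = ((g + 1 : ℕ) : WithBot ℕ) + ((g + 1 : ℕ) : WithBot ℕ) := by norm_cast; ring
  rw [hW]
  exact ⟨fun _ => eval_wronskian_ne_zero_of_eval_sub_C_mul_eq_zero hcop
      (IsAlgClosed.splits _) hp0 hnodupp,
    fun _ => eval_wronskian_ne_zero_of_eval_sub_C_mul_eq_zero hcop
      (IsAlgClosed.splits _) hq0 hnodupq,
    sum_roots_sub_C_mul_div_eval_wronskian_eq hcop (IsAlgClosed.splits _) hp0 hnodupp
      (IsAlgClosed.splits _) hq0 hnodupq hdeg⟩

theorem stmt13 (g : ℕ) (b₁ b₂ a : Polynomial ℂ)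
    (hdeg1 : b₁.degree ≤ (g + 1 : ℕ)) (hdeg2 : b₂.degree ≤ (g + 1 : ℕ))
    (hcop : ∀ μ : ℂ, ¬ (b₁.eval μ = 0 ∧ b₂.eval μ = 0))
    (ha : a.degree ≤ (2 * g : ℕ))
    (p q : ℂ)
    (hdegp : (b₁ - C p * b₂).degree = (g + 1 : ℕ))
    (hnodupp : (b₁ - C p * b₂).roots.Nodup)
    (hdegq : (b₁ - C q * b₂).degree = (g + 1 : ℕ))
    (hnodupq : (b₁ - C q * b₂).roots.Nodup) :
    (∀ β : ℂ, (b₁ - C p * b₂).eval β = 0 →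
      (derivative b₁ * b₂ - derivative b₂ * b₁).eval β ≠ 0) ∧
    (∀ β : ℂ, (b₁ - C q * b₂).eval β = 0 →
      (derivative b₁ * b₂ - derivative b₂ * b₁).eval β ≠ 0) ∧
    ∑ β ∈ (b₁ - C p * b₂).roots.toFinset,
        a.eval β / (derivative b₁ * b₂ - derivative b₂ * b₁).eval β
      = ∑ β ∈ (b₁ - C q * b₂).roots.toFinset,
          a.eval β / (derivative b₁ * b₂ - derivative b₂ * b₁).eval β :=
  stmt13_general g b₁ b₂ a hcop ha p q hdegp hnodupp hdegq hnodupq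
end

section
/- Let g ≥ 0, let a ∈ ℂ[λ] be a polynomial of degree 2g with 2g pairwise distinct roots, whose leading coefficient has absolute value 1, which satisfies the reality condition λ^{2g}·conj(a(1/conj(λ))) = a(λ) for all λ ∈ ℂ∖{0}, and for which λ^{−g}·a(λ) is a positive real number for every λ with |λ| = 1. Let α ∈ ℂ with |α| = 1, let t ∈ ℝ with t ≠ 0, and suppose a(α·e^t) ≠ 0 and a(α·e^{−t}) ≠ 0. Define a_t(λ) = (λ − α·e^t)·(conj(α)·λ − e^{−t})·a(λ). Then: a_t has degree 2g+2 and its leading coefficient has absolute value 1; a_t satisfies the reality condition λ^{2g+2}·conj(a_t(1/conj(λ))) = a_t(λ) for all λ ∈ ℂ∖{0}; the 2g+2 roots of a_t are pairwise distinct; and λ^{−(g+1)}·a_t(λ) is a nonzero real number for every λ with |λ| = 1. -/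
/-!
With `β = α e^t`, the new factor is `e^{-t} (λ - β)(conj β λ - 1)`, a quadratic whose roots `β` and
`1 / conj β = α e^{-t}` are mirror images in the unit circle. This quadratic satisfies the reality
condition of degree 2, and on the unit circle `λ⁻¹ (λ - β)(conj β λ - 1) = -|λ - β|²`, a nonzero real
because `|β| = e^t ≠ 1`. Both the reality condition and being a nonzero real on the circle after
division by `λ^n` are multiplicative, with degrees adding, and the two new roots are distinct and are
not roots of `a` by hypothesis.
-/

open Polynomial ComplexConjugate

theorem Complex.inv_conj_mul_ofReal {α : ℂ} (hα : ‖α‖ = 1) (s : ℝ) :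
    (conj (α * s))⁻¹ = α * (s⁻¹ : ℝ) := by
  rw [map_mul, Complex.conj_ofReal, mul_inv, ← Complex.conj_inv, Complex.inv_eq_conj hα,
    Complex.conj_conj, Complex.ofReal_inv]

namespace Polynomial

/-- The reality condition of degree `d`. -/
def IsSelfInversive (d : ℕ) (p : ℂ[X]) : Prop :=
  ∀ l : ℂ, l ≠ 0 → l ^ d * conj (p.eval (conj l)⁻¹) = p.eval l

def IsNonzeroRealOnCircle (n : ℕ) (p : ℂ[X]) : Prop :=
  ∀ l : ℂ, ‖l‖ = 1 → ∃ r : ℝ, r ≠ 0 ∧ p.eval l / l ^ n = r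

theorem IsSelfInversive.mul {m n : ℕ} {p q : ℂ[X]} (hp : IsSelfInversive m p)
    (hq : IsSelfInversive n q) : IsSelfInversive (m + n) (p * q) := by
  intro l hl
  rw [eval_mul, eval_mul, map_mul, ← hp l hl, ← hq l hl]
  ring

theorem IsSelfInversive.C_ofReal_mul {n : ℕ} {p : ℂ[X]} (hp : IsSelfInversive n p) (c : ℝ) :
    IsSelfInversive n (C (c : ℂ) * p) := by
  intro l hl
  simp only [eval_mul, eval_C, map_mul, Complex.conj_ofReal, ← hp l hl]
  ring

theorem IsNonzeroRealOnCircle.mul {m n : ℕ} {p q : ℂ[X]} (hp : IsNonzeroRealOnCircle m p)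
    (hq : IsNonzeroRealOnCircle n q) : IsNonzeroRealOnCircle (m + n) (p * q) := by
  intro l hl
  obtain ⟨r, hr, hpr⟩ := hp l hl
  obtain ⟨s, hs, hqs⟩ := hq l hl
  refine ⟨r * s, mul_ne_zero hr hs, ?_⟩
  rw [eval_mul, pow_add, mul_div_mul_comm, hpr, hqs, Complex.ofReal_mul]

theorem IsNonzeroRealOnCircle.C_ofReal_mul {n : ℕ} {p : ℂ[X]} (hp : IsNonzeroRealOnCircle n p)
    {c : ℝ} (hc : c ≠ 0) : IsNonzeroRealOnCircle n (C (c : ℂ) * p) := by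
  intro l hl
  obtain ⟨r, hr, hpr⟩ := hp l hl
  exact ⟨c * r, mul_ne_zero hc hr, by rw [eval_mul, eval_C, mul_div_assoc, hpr, Complex.ofReal_mul]⟩

/-- The quadratic whose roots are `β` and its reflection `(conj β)⁻¹` in the unit circle. -/
noncomputable def reflectionQuadratic (β : ℂ) : ℂ[X] := (X - C β) * (C (conj β) * X - 1)

theorem reflectionQuadratic_eq_C_mul {β : ℂ} (hβ : β ≠ 0) :
    reflectionQuadratic β = C (conj β) * ((X - C β) * (X - C (conj β)⁻¹)) := by
  have hβ' : conj β ≠ 0 := (_root_.map_ne_zero _).mpr hβ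
  rw [reflectionQuadratic, mul_left_comm, mul_sub (C (conj β)), ← C_mul, mul_inv_cancel₀ hβ', C_1]

theorem degree_reflectionQuadratic {β : ℂ} (hβ : β ≠ 0) : (reflectionQuadratic β).degree = 2 := by
  rw [reflectionQuadratic_eq_C_mul hβ, degree_C_mul ((_root_.map_ne_zero _).mpr hβ), degree_mul,
    degree_X_sub_C, degree_X_sub_C]
  rfl

theorem leadingCoeff_reflectionQuadratic {β : ℂ} (hβ : β ≠ 0) :
    (reflectionQuadratic β).leadingCoeff = conj β := by
  rw [reflectionQuadratic_eq_C_mul hβ, leadingCoeff_mul, leadingCoeff_C, leadingCoeff_mul,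
    leadingCoeff_X_sub_C, leadingCoeff_X_sub_C, mul_one, mul_one]

theorem roots_reflectionQuadratic {β : ℂ} (hβ : β ≠ 0) :
    (reflectionQuadratic β).roots = {β, (conj β)⁻¹} := by
  rw [reflectionQuadratic_eq_C_mul hβ, roots_C_mul _ ((_root_.map_ne_zero _).mpr hβ),
    roots_mul (mul_ne_zero (X_sub_C_ne_zero _) (X_sub_C_ne_zero _)), roots_X_sub_C, roots_X_sub_C]
  rfl

theorem isSelfInversive_reflectionQuadratic (β : ℂ) : IsSelfInversive 2 (reflectionQuadratic β) := by
  intro l hl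
  simp only [reflectionQuadratic, eval_mul, eval_sub, eval_X, eval_C, eval_one, map_mul, map_sub,
    map_inv₀, Complex.conj_conj, map_one]
  field_simp
  ring

theorem isNonzeroRealOnCircle_reflectionQuadratic {β : ℂ} (hβ : ‖β‖ ≠ 1) :
    IsNonzeroRealOnCircle 1 (reflectionQuadratic β) := by
  intro l hl
  have hlβ : l - β ≠ 0 := fun h => hβ (by rw [← sub_eq_zero.mp h, hl])
  refine ⟨-‖l - β‖ ^ 2, neg_ne_zero.mpr (pow_ne_zero 2 (norm_ne_zero_iff.mpr hlβ)), ?_⟩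
  have hconj : conj l * l = 1 := by rw [Complex.conj_mul', hl]; simp
  have hl0 : l ≠ 0 := by rintro rfl; simp at hl
  rw [Complex.ofReal_neg, Complex.ofReal_pow, ← Complex.mul_conj', div_eq_iff (by simpa using hl0)]
  simp only [reflectionQuadratic, eval_mul, eval_sub, eval_X, eval_C, eval_one, map_sub]
  linear_combination (l - β) * hconj

theorem nodup_roots_reflectionQuadratic_mul {β : ℂ} {a : ℂ[X]} (hβ : β ≠ (conj β)⁻¹) (ha : a ≠ 0)
    (hnodup : a.roots.Nodup) (hβa : a.eval β ≠ 0) (hβa' : a.eval (conj β)⁻¹ ≠ 0) :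
    (reflectionQuadratic β * a).roots.Nodup := by
  have hβ0 : β ≠ 0 := by rintro rfl; simp at hβ
  have hq0 : reflectionQuadratic β ≠ 0 :=
    ne_zero_of_degree_gt (n := ⊥) (by rw [degree_reflectionQuadratic hβ0]; exact WithBot.bot_lt_coe 2)
  rw [roots_mul (mul_ne_zero hq0 ha), roots_reflectionQuadratic hβ0, Multiset.insert_eq_cons,
    Multiset.cons_add, Multiset.singleton_add]
  refine Multiset.nodup_cons.mpr ⟨?_, Multiset.nodup_cons.mpr ⟨?_, hnodup⟩⟩
  · rw [Multiset.mem_cons, mem_roots ha, not_or]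
    exact ⟨hβ, hβa⟩
  · rw [mem_roots ha]
    exact hβa'

theorem C_mul_reflectionQuadratic_mul_ofReal (α : ℂ) {s : ℝ} (hs : s ≠ 0) :
    C ((s⁻¹ : ℝ) : ℂ) * reflectionQuadratic (α * s) =
      (X - C (α * s)) * (C (conj α) * X - C ((s⁻¹ : ℝ) : ℂ)) := by
  have hs' : (s : ℂ) ≠ 0 := by exact_mod_cast hs
  refine Polynomial.funext fun x => ?_
  simp only [reflectionQuadratic, eval_mul, eval_sub, eval_X, eval_C, eval_one, map_mul,
    Complex.conj_ofReal, Complex.ofReal_inv]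
  field_simp

end Polynomial

theorem stmt14 (g : ℕ) (a : Polynomial ℂ)
    (hdeg : a.degree = (2 * g : ℕ)) (hnodup : a.roots.Nodup)
    (hlead : ‖a.leadingCoeff‖ = 1)
    (hreal : ∀ l : ℂ, l ≠ 0 →
      l ^ (2 * g) * (starRingEnd ℂ) (a.eval (((starRingEnd ℂ) l)⁻¹)) = a.eval l)
    (hpos : ∀ l : ℂ, ‖l‖ = 1 → ∃ r : ℝ, 0 < r ∧ a.eval l / l ^ g = (r : ℂ))
    (α : ℂ) (hα : ‖α‖ = 1) (t : ℝ) (ht : t ≠ 0)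
    (hroot1 : a.eval (α * Real.exp t) ≠ 0) (hroot2 : a.eval (α * Real.exp (-t)) ≠ 0) :
    ∀ aₜ : Polynomial ℂ,
      aₜ = (X - C (α * (Real.exp t : ℂ))) *
           (C ((starRingEnd ℂ) α) * X - C ((Real.exp (-t) : ℝ) : ℂ)) * a →
      (aₜ.degree = (2 * g + 2 : ℕ) ∧ ‖aₜ.leadingCoeff‖ = 1) ∧
      (∀ l : ℂ, l ≠ 0 →
        l ^ (2 * g + 2) * (starRingEnd ℂ) (aₜ.eval (((starRingEnd ℂ) l)⁻¹)) = aₜ.eval l) ∧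
      aₜ.roots.Nodup ∧
      (∀ l : ℂ, ‖l‖ = 1 → ∃ r : ℝ, r ≠ 0 ∧ aₜ.eval l / l ^ (g + 1) = (r : ℂ)) := by
  rintro aₜ rfl
  rw [Real.exp_neg] at hroot2 ⊢
  set s := Real.exp t with hs
  have hs0 : 0 < s := Real.exp_pos t
  have hs1 : s ≠ 1 := by rwa [hs, Ne, Real.exp_eq_one_iff]
  have hc : ((s⁻¹ : ℝ) : ℂ) ≠ 0 := by exact_mod_cast (inv_pos.mpr hs0).ne'
  have hα0 : α ≠ 0 := by rintro rfl; simp at hα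
  have hβ0 : α * s ≠ 0 := mul_ne_zero hα0 (by exact_mod_cast hs0.ne')
  have hnormβ : ‖α * s‖ = s := by
    rw [norm_mul, hα, Complex.norm_real, Real.norm_of_nonneg hs0.le, one_mul]
  have hane : a ≠ 0 := by rintro rfl; exact hroot1 eval_zero
  rw [← C_mul_reflectionQuadratic_mul_ofReal α hs0.ne']
  refine ⟨⟨?_, ?_⟩, ?_, ?_, ?_⟩
  · rw [degree_mul, degree_mul, degree_C hc, degree_reflectionQuadratic hβ0, hdeg, zero_add]
    push_cast
    exact add_comm _ _
  · rw [leadingCoeff_mul, leadingCoeff_mul, leadingCoeff_C, leadingCoeff_reflectionQuadratic hβ0,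
      norm_mul, norm_mul, hlead, Complex.norm_conj, hnormβ, Complex.norm_real,
      Real.norm_of_nonneg (inv_pos.mpr hs0).le, inv_mul_cancel₀ hs0.ne', one_mul]
  · rw [show 2 * g + 2 = 2 + 2 * g by ring]
    exact ((isSelfInversive_reflectionQuadratic _).C_ofReal_mul _).mul hreal
  · rw [mul_assoc, roots_C_mul _ hc]
    refine nodup_roots_reflectionQuadratic_mul ?_ hane hnodup hroot1
      (Complex.inv_conj_mul_ofReal hα s ▸ hroot2)
    rw [Complex.inv_conj_mul_ofReal hα, Ne, mul_right_inj' hα0, Complex.ofReal_inj]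
    exact fun h => hs1 (by nlinarith [mul_inv_cancel₀ hs0.ne'])
  · rw [add_comm]
    exact ((isNonzeroRealOnCircle_reflectionQuadratic (by rwa [hnormβ])).C_ofReal_mul
      (inv_pos.mpr hs0).ne').mul fun l hl => (hpos l hl).imp fun r hr => ⟨hr.1.ne', hr.2⟩
end
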